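/- Let k be a commutative ring, A a commutative k-algebra, S a k-algebra over A, D ∈ HS^p_k(A;Δ), φ : A[[s]]_Δ → A[[t]]_∇ a substitution map, and r ∈ U^p(S;Δ) a D-element. Then: (a) φ•r is a (φ•D)-element of U^q(S;∇); (b) φ•(r·r') = (φ•r)·(φ^D•r') for every r' ∈ S[[s]]_Δ, and in particular (φ•r)^{-1} = φ^D•(r^{-1}); (c) if E is an A-module and S = End_k(E), then (φ•r)~ ∘ (φ^D)_E = φ_E ∘ r̃ as maps E[[s]]_Δ → E[[t]]_∇. -/

import Mathlib

open scoped Classical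

namespace HS

/-- multi-indices in `ℕ^p` -/
abbrev MIdx (p : ℕ) := Fin p → ℕ

/-- the total weight `|α|` of a multi-index -/
def wt {p : ℕ} (α : MIdx p) : ℕ := ∑ i, α i

/-- a non-empty co-ideal of `ℕ^p` -/
def IsCoideal {p : ℕ} (Δ : Set (MIdx p)) : Prop :=
  Δ.Nonempty ∧ ∀ ⦃α : MIdx p⦄, α ∈ Δ → ∀ ⦃β : MIdx p⦄, β ≤ α → β ∈ Δ

/-- Convolution product of two power series, given by their coefficient families:
this is the multiplication of `R[[s]]_Δ` (in terms of representatives). -/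
def sconv {p : ℕ} {R : Type*} [NonUnitalNonAssocSemiring R] (f g : MIdx p → R) : MIdx p → R :=
  fun α => ∑ β ∈ Finset.Iic α, f β * g (α - β)

/-- Applying a series of linear operators to a series of module elements; for an
operator family `f`, `fapply f` is the induced `k[[s]]_Δ`-linear map `f̃ = ∑ f_β s^β`. -/
def fapply {p : ℕ} {k M N : Type*} [Semiring k] [AddCommMonoid M] [AddCommMonoid N]
    [Module k M] [Module k N] (f : MIdx p → (M →ₗ[k] N)) (m : MIdx p → M) : MIdx p → N :=
  fun α => ∑ β ∈ Finset.Iic α, f β (m (α - β))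

/-- a series of scalars acting on a series of module elements:
the module structure of `M[[s]]_Δ` over `A[[s]]_Δ` (in terms of representatives). -/
def smul' {p : ℕ} {A M : Type*} [Semiring A] [AddCommMonoid M] [Module A M]
    (a : MIdx p → A) (m : MIdx p → M) : MIdx p → M :=
  fun α => ∑ β ∈ Finset.Iic α, a β • m (α - β)

/-- the unit (delta) series `1` -/
def one' {p : ℕ} {R : Type*} [Zero R] [One R] : MIdx p → R :=
  fun α => if α = 0 then 1 else 0

/-- `D` is a `(p,Δ)`-variate Hasse–Schmidt derivation of `A` over `k`:
`D_0 = id` and the Leibniz rule `D_α(xy) = ∑_{β+γ=α} D_β(x) D_γ(y)` for `α ∈ Δ`. -/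
def IsHS (k A : Type*) [CommRing k] [CommRing A] [Algebra k A] {p : ℕ}
    (Δ : Set (MIdx p)) (D : MIdx p → Module.End k A) : Prop :=
  D 0 = 1 ∧ ∀ α ∈ Δ, ∀ x y : A,
    D α (x * y) = ∑ β ∈ Finset.Iic α, D β x * D (α - β) y

/-- A substitution map `φ : A[[s]]_Δ → A[[t]]_∇`, modelled by the family of its
coefficients `C α e = C_e(φ,α)` (the coefficient of `t^e` in `φ(s^α)`):
it is multiplicative on monomials, unital, of order `≥ 1` (so `C α e = 0` for
`|e| < |α|`), kills the classes of monomials `s^α` with `α ∉ Δ`, and is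
normalized to vanish outside `∇`. -/
structure SubstMap (A : Type*) [CommRing A] (p q : ℕ)
    (Δ : Set (MIdx p)) (nab : Set (MIdx q)) where
  C : MIdx p → MIdx q → A
  c_zero : ∀ e ∈ nab, C 0 e = if e = 0 then 1 else 0
  c_mul : ∀ α ∈ Δ, ∀ β ∈ Δ, ∀ e ∈ nab,
    C (α + β) e = ∑ u ∈ Finset.Iic e, C α u * C β (e - u)
  c_ord : ∀ α ∈ Δ, ∀ e ∈ nab, wt e < wt α → C α e = 0
  c_suppL : ∀ α : MIdx p, α ∉ Δ → ∀ e : MIdx q, C α e = 0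
  c_suppR : ∀ (α : MIdx p) (e : MIdx q), e ∉ nab → C α e = 0

variable {A' : Type*} [CommRing A'] {p' q' : ℕ} {Δ' : Set (MIdx p')} {nab' : Set (MIdx q')}

/-- the map `A[[s]]_Δ → A[[t]]_∇` induced by a substitution map -/
def SubstMap.app (φ : SubstMap A' p' q' Δ' nab') (f : MIdx p' → A') : MIdx q' → A' :=
  fun e => ∑ α ∈ Finset.Iic (fun _ => wt e : MIdx p'), φ.C α e * f α

/-- `φ • D` for a series of `k`-linear endomorphisms of `A` -/
def SubstMap.bulletEnd {k : Type*} [CommRing k] [Algebra k A']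
    (φ : SubstMap A' p' q' Δ' nab') (D : MIdx p' → Module.End k A') :
    MIdx q' → Module.End k A' :=
  fun e => ∑ α ∈ Finset.Iic (fun _ => wt e : MIdx p'), φ.C α e • D α

/-- `φ • r` for a series with coefficients in a `k`-algebra `S` over `A`
(with structural map `ι : A → S`) -/
def SubstMap.bulletS {S : Type*} [Ring S] (ι : A' → S)
    (φ : SubstMap A' p' q' Δ' nab') (r : MIdx p' → S) : MIdx q' → S :=
  fun e => ∑ α ∈ Finset.Iic (fun _ => wt e : MIdx p'), ι (φ.C α e) * r α

/-- `r • φ` for a series with coefficients in a `k`-algebra `S` over `A` -/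
def SubstMap.bulletSR {S : Type*} [Ring S] (ι : A' → S)
    (φ : SubstMap A' p' q' Δ' nab') (r : MIdx p' → S) : MIdx q' → S :=
  fun e => ∑ α ∈ Finset.Iic (fun _ => wt e : MIdx p'), r α * ι (φ.C α e)

/-- `φ • m` for a series with coefficients in an `A`-module `M` -/
def SubstMap.bulletM {M : Type*} [AddCommMonoid M] [Module A' M]
    (φ : SubstMap A' p' q' Δ' nab') (m : MIdx p' → M) : MIdx q' → M :=
  fun e => ∑ α ∈ Finset.Iic (fun _ => wt e : MIdx p'), φ.C α e • m α

/-- `φ` has constant coefficients, i.e. all the `C_e(φ,α)` come from `k` -/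
def SubstMap.HasConstCoeffs (k : Type*) [CommRing k] [Algebra k A']
    (φ : SubstMap A' p' q' Δ' nab') : Prop :=
  ∀ (α : MIdx p') (e : MIdx q'), φ.C α e ∈ Set.range (algebraMap k A')

/-- `φ • r` for a series of `k`-linear endomorphisms of an `A`-module `M` -/
def SubstMap.bulletEndM {M : Type*} [AddCommGroup M] [Module A' M]
    {k : Type*} [CommRing k] [Algebra k A'] [Module k M] [IsScalarTower k A' M]
    (φ : SubstMap A' p' q' Δ' nab') (r : MIdx p' → Module.End k M) :
    MIdx q' → Module.End k M :=
  fun e => ∑ α ∈ Finset.Iic (fun _ => wt e : MIdx p'), φ.C α e • r α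


/-!
A `D`-element `r` satisfies `r·a = D̃(a)·r`; for constant `a ∈ A` this is a coefficientwise
identity, and transporting it along `φ`, which is multiplicative on monomials, shows that `φ•r`
is a `(φ•D)`-element. The defining property of `φ^D`, applied to a monomial `s^γ` (fixed by `D̃`,
since `D_δ(1) = 0` for `δ ≠ 0`), gives `(φ•D)~(φ^D(s^γ)) = φ(s^γ)`; combined with (a) this is
`φ•(r s^γ) = (φ•r)·φ^D(s^γ)`, and (b) and (c) follow by linearity in the second factor, which may
be taken in any `S`-module (`E` over `End_k(E)` for (c)). The inverse formula holds because a
right inverse of a series with constant coefficient `1` is also a left inverse.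
-/

section MultiIndex

variable {p : ℕ}

lemma IsCoideal.zero_mem {Δ : Set (MIdx p)} (hΔ : IsCoideal Δ) : 0 ∈ Δ :=
  hΔ.1.elim fun _ hα => hΔ.2 hα zero_le

lemma lt_wt_of_not_le {N : ℕ} {α : MIdx p} (h : ¬ α ≤ fun _ => N) : N < wt α := by
  obtain ⟨i, hi⟩ : ∃ i, N < α i := by simpa [Pi.le_def] using h
  exact hi.trans_le (Finset.single_le_sum (fun j _ => Nat.zero_le (α j)) (Finset.mem_univ i))

lemma wt_mono {α β : MIdx p} (h : α ≤ β) : wt α ≤ wt β :=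
  Finset.sum_le_sum fun i _ => h i

lemma sum_Iic_tsub {M : Type*} [AddCommMonoid M] (α : MIdx p) (G : MIdx p → M) :
    ∑ β ∈ Finset.Iic α, G (α - β) = ∑ β ∈ Finset.Iic α, G β :=
  Finset.sum_nbij' (α - ·) (α - ·) (fun _ _ => Finset.mem_Iic.2 tsub_le_self)
    (fun _ _ => Finset.mem_Iic.2 tsub_le_self)
    (fun _ hβ => tsub_tsub_cancel_of_le (Finset.mem_Iic.1 hβ))
    (fun _ hβ => tsub_tsub_cancel_of_le (Finset.mem_Iic.1 hβ)) fun _ _ => rfl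

lemma sum_Iic_sum_Iic_tsub {M : Type*} [AddCommMonoid M] (e : MIdx p)
    (F : MIdx p → MIdx p → M) :
    ∑ u ∈ Finset.Iic e, ∑ v ∈ Finset.Iic u, F v (u - v)
      = ∑ v ∈ Finset.Iic e, ∑ w ∈ Finset.Iic (e - v), F v w := by
  rw [Finset.sum_sigma', Finset.sum_sigma']
  refine Finset.sum_nbij' (fun x => ⟨x.2, x.1 - x.2⟩) (fun x => ⟨x.1 + x.2, x.1⟩) ?_ ?_ ?_ ?_
    fun _ _ => rfl
  · rintro ⟨u, v⟩ h
    simp only [Finset.mem_sigma, Finset.mem_Iic] at h ⊢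
    exact ⟨h.2.trans h.1, tsub_le_tsub_right h.1 _⟩
  · rintro ⟨v, w⟩ h
    simp only [Finset.mem_sigma, Finset.mem_Iic] at h ⊢
    exact ⟨(le_tsub_iff_left h.1).1 h.2, le_self_add⟩
  · rintro ⟨u, v⟩ h
    simp only [Finset.mem_sigma, Finset.mem_Iic] at h
    simp [add_tsub_cancel_of_le h.2]
  · rintro ⟨v, w⟩ -
    simp

lemma sum_Iic_sum_Iic_comm {M : Type*} [AddCommMonoid M] (e : MIdx p)
    (F : MIdx p → MIdx p → M) :
    ∑ v ∈ Finset.Iic e, ∑ w ∈ Finset.Iic (e - v), F v w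
      = ∑ w ∈ Finset.Iic e, ∑ v ∈ Finset.Iic (e - w), F v w := by
  rw [← sum_Iic_sum_Iic_tsub, ← sum_Iic_sum_Iic_tsub]
  refine Finset.sum_congr rfl fun u _ => ?_
  rw [← sum_Iic_tsub u]
  exact Finset.sum_congr rfl fun v hv => by rw [tsub_tsub_cancel_of_le (Finset.mem_Iic.1 hv)]

lemma sum_Iic_single_tsub {M N : Type*} [AddCommMonoid M] [Zero N] (α γ : MIdx p) (x : N)
    (F : MIdx p → N → M) (hF : ∀ β, F β 0 = 0) :
    ∑ β ∈ Finset.Iic α, F β ((Pi.single γ x : MIdx p → N) (α - β))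
      = if γ ≤ α then F (α - γ) x else 0 := by
  rw [← sum_Iic_tsub]
  have hterm : ∀ β ∈ Finset.Iic α, F (α - β) ((Pi.single γ x : MIdx p → N) (α - (α - β)))
      = if β = γ then F (α - β) x else 0 := fun β hβ => by
    rw [tsub_tsub_cancel_of_le (Finset.mem_Iic.1 hβ), Pi.single_apply]
    split_ifs <;> simp [hF]
  rw [Finset.sum_congr rfl hterm, Finset.sum_ite_eq']
  simp only [Finset.mem_Iic]

lemma sum_Iic_single_zero_tsub {M N : Type*} [AddCommMonoid M] [Zero N] (α : MIdx p)
    (x : N) (F : MIdx p → N → M) (hF : ∀ β, F β 0 = 0) :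
    ∑ β ∈ Finset.Iic α, F β ((Pi.single 0 x : MIdx p → N) (α - β)) = F α x := by
  simp [sum_Iic_single_tsub α 0 x F hF]

lemma fapply_single_zero {k M N : Type*} [Semiring k] [AddCommMonoid M]
    [AddCommMonoid N] [Module k M] [Module k N] (f : MIdx p → (M →ₗ[k] N)) (x : M) :
    fapply f (Pi.single 0 x) = fun α => f α x :=
  funext fun α => sum_Iic_single_zero_tsub α x (fun β y => f β y) fun _ => map_zero _

lemma sum_Iic_smul_sum_Iic_tsub {R M : Type*} [Semiring R] [AddCommMonoid M] [Module R M]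
    (B : MIdx p) (c : MIdx p → R) (hc : ∀ α, ¬ α ≤ B → c α = 0) (F : MIdx p → MIdx p → M) :
    ∑ α ∈ Finset.Iic B, c α • ∑ β ∈ Finset.Iic α, F β (α - β)
      = ∑ β ∈ Finset.Iic B, ∑ γ ∈ Finset.Iic B, c (β + γ) • F β γ := by
  have h : ∀ α ∈ Finset.Iic B, c α • ∑ β ∈ Finset.Iic α, F β (α - β)
      = ∑ β ∈ Finset.Iic α, c (β + (α - β)) • F β (α - β) := fun α _ => by
    rw [Finset.smul_sum]
    exact Finset.sum_congr rfl fun β hβ => by rw [add_tsub_cancel_of_le (Finset.mem_Iic.1 hβ)]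
  rw [Finset.sum_congr rfl h, sum_Iic_sum_Iic_tsub B fun β γ => c (β + γ) • F β γ]
  refine Finset.sum_congr rfl fun β hβ => Finset.sum_subset ?_ fun γ _ hγ => ?_
  · exact Finset.Iic_subset_Iic.2 tsub_le_self
  · rw [Finset.mem_Iic, le_tsub_iff_left (Finset.mem_Iic.1 hβ)] at hγ
    rw [hc _ hγ, zero_smul]

end MultiIndex

section Convolution

variable {q : ℕ} {S : Type*} [Ring S] {nab : Set (MIdx q)}

lemma sconv_assoc (a b c : MIdx q → S) (e : MIdx q) :
    sconv (sconv a b) c e = sconv a (sconv b c) e := by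
  simp only [sconv, Finset.sum_mul, Finset.mul_sum]
  have h : ∀ u ∈ Finset.Iic e, ∑ v ∈ Finset.Iic u, a v * b (u - v) * c (e - u)
      = ∑ v ∈ Finset.Iic u, a v * (b (u - v) * c (e - v - (u - v))) := fun u hu =>
    Finset.sum_congr rfl fun v hv => by
      rw [tsub_tsub, add_tsub_cancel_of_le (Finset.mem_Iic.1 hv), mul_assoc]
  rw [Finset.sum_congr rfl h, sum_Iic_sum_Iic_tsub e fun v w => a v * (b w * c (e - v - w))]

lemma sconv_one'_left (a : MIdx q → S) (e : MIdx q) : sconv one' a e = a e := by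
  rw [sconv, Finset.sum_eq_single_of_mem 0 (Finset.mem_Iic.2 zero_le)] <;>
    simp +contextual [one']

lemma sconv_one'_right (a : MIdx q → S) (e : MIdx q) : sconv a one' e = a e := by
  rw [sconv, Finset.sum_eq_single_of_mem e (Finset.mem_Iic.2 le_rfl)]
  · simp [one']
  · intro β hβ hne
    rw [one', if_neg fun h => hne (le_antisymm (Finset.mem_Iic.1 hβ) (tsub_eq_zero_iff_le.1 h)),
      mul_zero]

lemma sconv_congr_left (hnab : IsCoideal nab) {a a' : MIdx q → S} (h : ∀ e ∈ nab, a e = a' e)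
    (b : MIdx q → S) {e : MIdx q} (he : e ∈ nab) : sconv a b e = sconv a' b e :=
  Finset.sum_congr rfl fun β hβ => by rw [h β (hnab.2 he (Finset.mem_Iic.1 hβ))]

lemma eq_of_sconv_eq (hnab : IsCoideal nab) {P X Y : MIdx q → S} (hP0 : P 0 = 1)
    (h : ∀ e ∈ nab, sconv P X e = sconv P Y e) : ∀ e ∈ nab, X e = Y e := by
  intro e
  induction e using WellFoundedLT.induction with
  | _ e ih =>
    intro he
    have hsplit : ∀ Z : MIdx q → S, sconv P Z e
        = Z e + ∑ β ∈ (Finset.Iic e).erase 0, P β * Z (e - β) := fun Z => by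
      rw [sconv, ← Finset.add_sum_erase _ _ (Finset.mem_Iic.2 zero_le), hP0, one_mul,
        tsub_zero]
    have htail : ∀ β ∈ (Finset.Iic e).erase 0, P β * X (e - β) = P β * Y (e - β) := by
      intro β hβ
      obtain ⟨hβ0, hβe⟩ := Finset.mem_erase.1 hβ
      have hlt : e - β < e := tsub_le_self.lt_of_ne fun hβe' => hβ0 <| by
        have h1 := add_tsub_cancel_of_le (Finset.mem_Iic.1 hβe)
        rwa [hβe', add_eq_right] at h1
      rw [ih _ hlt (hnab.2 he tsub_le_self)]
    have := h e he
    rwa [hsplit, hsplit, Finset.sum_congr rfl htail, add_left_inj] at this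

lemma sconv_eq_one'_comm (hnab : IsCoideal nab) {P Q : MIdx q → S} (hP0 : P 0 = 1)
    (h : ∀ e ∈ nab, sconv P Q e = one' e) : ∀ e ∈ nab, sconv Q P e = one' e := by
  refine eq_of_sconv_eq hnab hP0 fun e he => ?_
  rw [← sconv_assoc, sconv_congr_left hnab h P he, sconv_one'_left, sconv_one'_right]

end Convolution

namespace SubstMap

variable {A : Type*} [CommRing A] {p q : ℕ} {Δ : Set (MIdx p)} {nab : Set (MIdx q)}
  (φ : SubstMap A p q Δ nab)

lemma C_eq_zero_of_not_le {α : MIdx p} {e : MIdx q} (h : ¬ α ≤ fun _ => wt e) :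
    φ.C α e = 0 := by
  by_cases he : e ∈ nab
  · by_cases hα : α ∈ Δ
    · exact φ.c_ord α hα e he (lt_wt_of_not_le h)
    · exact φ.c_suppL α hα e
  · exact φ.c_suppR α e he

lemma sum_Iic_eq_of_le {M : Type*} [AddCommMonoid M] {e : MIdx q} {B : MIdx p}
    (hB : (fun _ => wt e) ≤ B) (F : MIdx p → M) (hF : ∀ α, φ.C α e = 0 → F α = 0) :
    ∑ α ∈ Finset.Iic (fun _ => wt e : MIdx p), F α = ∑ α ∈ Finset.Iic B, F α :=
  Finset.sum_subset (Finset.Iic_subset_Iic.2 hB) fun α _ hα =>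
    hF α (φ.C_eq_zero_of_not_le (by simpa using hα))

lemma C_add (hΔ : IsCoideal Δ) {e : MIdx q} (he : e ∈ nab) (β γ : MIdx p) :
    φ.C (β + γ) e = ∑ u ∈ Finset.Iic e, φ.C β u * φ.C γ (e - u) := by
  by_cases hβ : β ∈ Δ
  · by_cases hγ : γ ∈ Δ
    · exact φ.c_mul β hβ γ hγ e he
    · rw [φ.c_suppL _ fun h => hγ (hΔ.2 h le_add_self)]
      simp [φ.c_suppL γ hγ]
  · rw [φ.c_suppL _ fun h => hβ (hΔ.2 h le_self_add)]
    simp [φ.c_suppL β hβ]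

lemma app_congr {f g : MIdx p → A} (h : ∀ α ∈ Δ, f α = g α) : φ.app f = φ.app g :=
  funext fun e => Finset.sum_congr rfl fun α _ => by
    by_cases hα : α ∈ Δ
    · rw [h α hα]
    · simp [φ.c_suppL α hα]

lemma app_single_one (γ : MIdx p) : φ.app (Pi.single γ 1) = φ.C γ := by
  funext e
  rw [app, Finset.sum_eq_single γ]
  · simp
  · intro α _ hα
    simp [hα]
  · intro hγ
    simp [φ.C_eq_zero_of_not_le (by simpa using hγ)]

section bullet

variable {S : Type*} [Ring S] {F : Type*} [FunLike F A S] [RingHomClass F A S] (ι : F)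

lemma bulletS_congr {f g : MIdx p → S} (h : ∀ α ∈ Δ, f α = g α) :
    φ.bulletS ι f = φ.bulletS ι g :=
  funext fun e => Finset.sum_congr rfl fun α _ => by
    by_cases hα : α ∈ Δ
    · rw [h α hα]
    · simp [φ.c_suppL α hα]

lemma bulletS_one' {e : MIdx q} (he : e ∈ nab) : φ.bulletS ι one' e = one' e := by
  rw [bulletS, Finset.sum_eq_single_of_mem 0 (Finset.mem_Iic.2 zero_le)]
  · rw [φ.c_zero e he]
    split_ifs <;> simp [one', *]
  · intro α _ hα
    simp [one', hα]

lemma bulletS_zero (h0 : (0 : MIdx q) ∈ nab) (r : MIdx p → S) : φ.bulletS ι r 0 = r 0 := by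
  have hbox : (fun _ => wt (0 : MIdx q) : MIdx p) = 0 := funext fun _ => by simp [wt]
  rw [bulletS, hbox, Finset.sum_eq_single_of_mem 0 (Finset.mem_Iic.2 le_rfl), φ.c_zero 0 h0]
  · simp
  · exact fun α hα hα0 => absurd (le_antisymm (Finset.mem_Iic.1 hα) zero_le) hα0

end bullet

end SubstMap

section HasseSchmidt

variable {k A : Type*} [CommRing k] [CommRing A] [Algebra k A] {p : ℕ} {Δ : Set (MIdx p)}
  {D : MIdx p → Module.End k A}

lemma IsHS.apply_one (hΔ : IsCoideal Δ) (hD : IsHS k A Δ D) : ∀ δ ∈ Δ, D δ 1 = one' δ := by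
  intro δ
  induction δ using WellFoundedLT.induction with
  | _ δ ih =>
    intro hδ
    by_cases hδ0 : δ = 0
    · simp [one', hδ0, hD.1]
    have hlow : ∑ β ∈ (Finset.Iic δ).erase δ, D β 1 * D (δ - β) 1 = D δ 1 := by
      rw [Finset.sum_eq_single_of_mem 0
        (Finset.mem_erase.2 ⟨Ne.symm hδ0, Finset.mem_Iic.2 zero_le⟩)]
      · simp [hD.1]
      · intro β hβ hβ0
        obtain ⟨hβδ, hβ⟩ := Finset.mem_erase.1 hβ
        have hlt : β < δ := (Finset.mem_Iic.1 hβ).lt_of_ne hβδ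
        rw [ih β hlt (hΔ.2 hδ hlt.le), one', if_neg hβ0, zero_mul]
    have key := hD.2 δ hδ 1 1
    rw [mul_one, ← Finset.sum_erase_add _ _ (Finset.mem_Iic.2 le_rfl), hlow, tsub_self, hD.1,
      Module.End.one_apply, mul_one, left_eq_add] at key
    rw [key, one', if_neg hδ0]

lemma IsHS.fapply_single_one (hΔ : IsCoideal Δ) (hD : IsHS k A Δ D) (γ : MIdx p) :
    ∀ α ∈ Δ, fapply D (Pi.single γ 1) α = (Pi.single γ 1 : MIdx p → A) α := by
  intro α hα
  rw [fapply, sum_Iic_single_tsub α γ 1 (fun β y => D β y) fun _ => map_zero _, Pi.single_apply]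
  split_ifs with hγα hαγ hαγ
  · rw [hD.apply_one hΔ _ (hΔ.2 hα tsub_le_self), one', if_pos (by simp [hαγ])]
  · rw [hD.apply_one hΔ _ (hΔ.2 hα tsub_le_self), one',
      if_neg fun h => hαγ (le_antisymm (tsub_eq_zero_iff_le.1 h) hγα)]
  · exact absurd (hαγ ▸ le_rfl) hγα
  · rfl

end HasseSchmidt

section DElement

variable {k A S : Type*} [CommRing k] [CommRing A] [Algebra k A] [Ring S]
  {F : Type*} [FunLike F A S] [RingHomClass F A S] (ι : F) {p q : ℕ} {Δ : Set (MIdx p)}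
  {nab : Set (MIdx q)}

/-- The `D`-element identity `r·a = D̃(a)·r` for constant series `a ∈ A`, coefficientwise;
by `isDElement_iff` it is equivalent to the identity for all `a ∈ A[[s]]_Δ`. -/
def IsDElement (Δ : Set (MIdx p)) (D : MIdx p → Module.End k A) (r : MIdx p → S) : Prop :=
  ∀ c : A, ∀ α ∈ Δ, r α * ι c = ∑ δ ∈ Finset.Iic α, ι (D δ c) * r (α - δ)

lemma isDElement_iff (hΔ : IsCoideal Δ) {D : MIdx p → Module.End k A} {r : MIdx p → S} :
    IsDElement ι Δ D r ↔ ∀ a : MIdx p → A, ∀ α ∈ Δ,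
      sconv r (fun γ => ι (a γ)) α = sconv (fun γ => ι (fapply D a γ)) r α := by
  refine ⟨fun hr a α hα => ?_, fun h c α hα => ?_⟩
  · have h1 : ∀ u ∈ Finset.Iic α, r u * ι (a (α - u))
        = ∑ v ∈ Finset.Iic u, ι (D v (a (α - (u - v) - v))) * r (u - v) := fun u hu => by
      rw [hr _ u (hΔ.2 hα (Finset.mem_Iic.1 hu))]
      refine Finset.sum_congr rfl fun v hv => ?_
      rw [tsub_tsub, tsub_add_cancel_of_le (Finset.mem_Iic.1 hv)]
    rw [sconv, Finset.sum_congr rfl h1,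
      sum_Iic_sum_Iic_tsub α fun v w => ι (D v (a (α - w - v))) * r w, sum_Iic_sum_Iic_comm,
      sconv, ← sum_Iic_tsub α]
    refine Finset.sum_congr rfl fun w hw => ?_
    rw [tsub_tsub_cancel_of_le (Finset.mem_Iic.1 hw), ← Finset.sum_mul, ← map_sum]
    rfl
  · have := h (Pi.single 0 c) α hα
    rwa [sconv, sum_Iic_single_zero_tsub α c (fun β y => r β * ι y) fun _ => by simp,
      fapply_single_zero] at this

lemma isDElement_lsmul {E : Type*} [AddCommGroup E] [Module k E] [Module A E]
    [IsScalarTower k A E] {D : MIdx p → Module.End k A} {r : MIdx p → Module.End k E}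
    (h : ∀ (a : MIdx p → A) (m : MIdx p → E), ∀ α ∈ Δ,
      fapply r (smul' a m) α = smul' (fapply D a) (fapply r m) α) :
    IsDElement (Algebra.lsmul k k E) Δ D r := by
  intro c α hα
  ext x
  have hcx : smul' (Pi.single 0 c) (Pi.single 0 x) = (Pi.single 0 (c • x) : MIdx p → E) :=
    funext fun ξ => by
      rw [smul', sum_Iic_single_zero_tsub ξ x (fun β y => (Pi.single 0 c : MIdx p → A) β • y)
        fun _ => smul_zero _, Pi.single_apply, Pi.single_apply]
      split_ifs <;> simp
  have := h (Pi.single 0 c) (Pi.single 0 x) α hα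
  rw [hcx, fapply_single_zero, fapply_single_zero, fapply_single_zero, smul'] at this
  simpa [LinearMap.sum_apply] using this

end DElement

/-- `φD` is the substitution map `φ^D`: `(φ•D)~ ∘ φ^D = φ ∘ D̃`. -/
def SubstMap.IsTwist {k A : Type*} [CommRing k] [CommRing A] [Algebra k A] {p q : ℕ}
    {Δ : Set (MIdx p)} {nab : Set (MIdx q)} (φ : SubstMap A p q Δ nab)
    (D : MIdx p → Module.End k A) (φD : SubstMap A p q Δ nab) : Prop :=
  ∀ f : MIdx p → A, ∀ e ∈ nab, fapply (φ.bulletEnd D) (φD.app f) e = φ.app (fapply D f) e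

/-- The map `ψ_M : M[[s]]_Δ → M[[t]]_∇` for a module `M` over a ring `S` over `A` (via `ι`). -/
def SubstMap.bulletSM {A S M : Type*} [CommRing A] [Ring S] [AddCommMonoid M] [Module S M]
    {F : Type*} [FunLike F A S] (ι : F) {p q : ℕ} {Δ : Set (MIdx p)} {nab : Set (MIdx q)}
    (φ : SubstMap A p q Δ nab) (m : MIdx p → M) : MIdx q → M :=
  fun e => ∑ α ∈ Finset.Iic (fun _ => wt e : MIdx p), ι (φ.C α e) • m α

section Substitution

variable {k A S : Type*} [CommRing k] [CommRing A] [Algebra k A] [Ring S]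
  {F : Type*} [FunLike F A S] [RingHomClass F A S] (ι : F) {p q : ℕ} {Δ : Set (MIdx p)}
  {nab : Set (MIdx q)} (φ : SubstMap A p q Δ nab) {D : MIdx p → Module.End k A}
  {r : MIdx p → S}

lemma SubstMap.IsTwist.fapply_bulletEnd_C {φD : SubstMap A p q Δ nab} (hΔ : IsCoideal Δ)
    (hD : IsHS k A Δ D) (h : φ.IsTwist D φD) (γ : MIdx p) {e : MIdx q} (he : e ∈ nab) :
    fapply (φ.bulletEnd D) (φD.C γ) e = φ.C γ e := by
  rw [← φD.app_single_one, h _ e he, φ.app_congr (hD.fapply_single_one hΔ γ), φ.app_single_one]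

lemma IsDElement.bulletS (hΔ : IsCoideal Δ) (hr : IsDElement ι Δ D r) :
    IsDElement ι nab (φ.bulletEnd D) (φ.bulletS ι r) := by
  intro c u hu
  set B : MIdx p := fun _ => wt u
  have hC : ∀ α, ¬ α ≤ B → ι (φ.C α u) = 0 := fun α h => by
    rw [φ.C_eq_zero_of_not_le h, map_zero]
  calc φ.bulletS ι r u * ι c
      = ∑ α ∈ Finset.Iic B, ι (φ.C α u) • ∑ δ ∈ Finset.Iic α, ι (D δ c) * r (α - δ) := by
        rw [SubstMap.bulletS, Finset.sum_mul]
        refine Finset.sum_congr rfl fun α _ => ?_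
        by_cases hα : α ∈ Δ
        · rw [smul_eq_mul, mul_assoc, hr c α hα]
        · simp [φ.c_suppL α hα]
    _ = ∑ δ ∈ Finset.Iic B, ∑ w ∈ Finset.Iic B, ι (φ.C (δ + w) u) • (ι (D δ c) * r w) :=
        sum_Iic_smul_sum_Iic_tsub B _ hC fun δ w => ι (D δ c) * r w
    _ = ∑ δ ∈ Finset.Iic B, ∑ w ∈ Finset.Iic B, ∑ v ∈ Finset.Iic u,
          ι (φ.C δ v * D δ c) * (ι (φ.C w (u - v)) * r w) := by
        refine Finset.sum_congr rfl fun δ _ => Finset.sum_congr rfl fun w _ => ?_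
        rw [φ.C_add hΔ hu, map_sum, smul_eq_mul, Finset.sum_mul]
        refine Finset.sum_congr rfl fun v _ => ?_
        simp only [map_mul, mul_assoc, ((Commute.all (D δ c) _).map ι).left_comm]
    _ = ∑ v ∈ Finset.Iic u, (∑ δ ∈ Finset.Iic B, ι (φ.C δ v * D δ c))
          * ∑ w ∈ Finset.Iic B, ι (φ.C w (u - v)) * r w := by
        simp only [Finset.sum_mul_sum]
        exact (Finset.sum_congr rfl fun _ _ => Finset.sum_comm).trans Finset.sum_comm
    _ = ∑ v ∈ Finset.Iic u, ι (φ.bulletEnd D v c) * φ.bulletS ι r (u - v) := by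
        refine Finset.sum_congr rfl fun v hv => ?_
        have hvu := Finset.mem_Iic.1 hv
        rw [SubstMap.bulletEnd, SubstMap.bulletS, LinearMap.sum_apply, map_sum,
          φ.sum_Iic_eq_of_le (B := B) (fun _ => wt_mono hvu) _ fun α h => by simp [h],
          φ.sum_Iic_eq_of_le (B := B) (fun _ => wt_mono (tsub_le_self : u - v ≤ u)) _
            fun α h => by simp [h]]
        rfl

variable {φD : SubstMap A p q Δ nab}

/-- `φ•(r s^γ) = (φ•r)·φ^D(s^γ)`, coefficientwise. -/
lemma IsDElement.sum_C_add_mul (hΔ : IsCoideal Δ) (hnab : IsCoideal nab) (hD : IsHS k A Δ D)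
    (hφD : φ.IsTwist D φD) (hr : IsDElement ι Δ D r) (γ : MIdx p) {e : MIdx q} (he : e ∈ nab) :
    ∑ β ∈ Finset.Iic (fun _ => wt e : MIdx p), ι (φ.C (β + γ) e) * r β
      = sconv (φ.bulletS ι r) (fun u => ι (φD.C γ u)) e := by
  rw [(isDElement_iff ι hnab).1 (hr.bulletS ι φ hΔ) (φD.C γ) e he]
  calc ∑ β ∈ Finset.Iic (fun _ => wt e : MIdx p), ι (φ.C (β + γ) e) * r β
      = ∑ β ∈ Finset.Iic (fun _ => wt e : MIdx p), ∑ u ∈ Finset.Iic e,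
          ι (φ.C γ u) * (ι (φ.C β (e - u)) * r β) := by
        refine Finset.sum_congr rfl fun β _ => ?_
        rw [add_comm, φ.C_add hΔ he, map_sum, Finset.sum_mul]
        simp only [map_mul, mul_assoc]
    _ = sconv (fun u => ι (fapply (φ.bulletEnd D) (φD.C γ) u)) (φ.bulletS ι r) e := by
        rw [Finset.sum_comm, sconv]
        refine Finset.sum_congr rfl fun u hu => ?_
        have hue := Finset.mem_Iic.1 hu
        rw [hφD.fapply_bulletEnd_C φ hΔ hD γ (hnab.2 he hue), SubstMap.bulletS,
          φ.sum_Iic_eq_of_le (fun _ => wt_mono (tsub_le_self : e - u ≤ e)) _ fun α h => by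
            simp [h], Finset.mul_sum]

lemma IsDElement.bulletSM_smul' {M : Type*} [AddCommMonoid M] [Module S M] (hΔ : IsCoideal Δ)
    (hnab : IsCoideal nab) (hD : IsHS k A Δ D) (hφD : φ.IsTwist D φD) (hr : IsDElement ι Δ D r)
    (m : MIdx p → M) {e : MIdx q} (he : e ∈ nab) :
    φ.bulletSM ι (smul' r m) e = smul' (φ.bulletS ι r) (φD.bulletSM ι m) e := by
  set B : MIdx p := fun _ => wt e
  calc φ.bulletSM ι (smul' r m) e
      = ∑ β ∈ Finset.Iic B, ∑ γ ∈ Finset.Iic B, ι (φ.C (β + γ) e) • (r β • m γ) :=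
        sum_Iic_smul_sum_Iic_tsub B _ (fun α h => by rw [φ.C_eq_zero_of_not_le h, map_zero])
          fun β γ => r β • m γ
    _ = ∑ γ ∈ Finset.Iic B, sconv (φ.bulletS ι r) (fun u => ι (φD.C γ u)) e • m γ := by
        rw [Finset.sum_comm]
        refine Finset.sum_congr rfl fun γ _ => ?_
        rw [← hr.sum_C_add_mul ι φ hΔ hnab hD hφD γ he, Finset.sum_smul]
        simp only [mul_smul, B]
    _ = smul' (φ.bulletS ι r) (φD.bulletSM ι m) e := by
        simp only [sconv, Finset.sum_smul, mul_smul]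
        rw [Finset.sum_comm, smul']
        refine Finset.sum_congr rfl fun u hu => ?_
        rw [SubstMap.bulletSM, φD.sum_Iic_eq_of_le (B := B)
          (fun _ => wt_mono (tsub_le_self : e - u ≤ e)) _ fun α h => by simp [h],
          Finset.smul_sum]

end Substitution

theorem stmt9_general (k A S : Type*) [CommRing k] [CommRing A] [Algebra k A]
    [Ring S] [Algebra k S] (ι : A →ₐ[k] S)
    (p q : ℕ) (Δ : Set (MIdx p)) (nab : Set (MIdx q))
    (hΔ : IsCoideal Δ) (hnab : IsCoideal nab)
    (φ : SubstMap A p q Δ nab)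
    (D : MIdx p → Module.End k A)
    (hD : IsHS k A Δ D)
    (φD : SubstMap A p q Δ nab)
    -- defining property of `φ^D`:  `(φ•D)~ ∘ φ^D = φ ∘ D̃`
    (hφD : ∀ f : MIdx p → A, ∀ e ∈ nab,
      fapply (φ.bulletEnd D) (φD.app f) e = φ.app (fapply D f) e)
    (E : Type*) [AddCommGroup E] [Module k E] [Module A E] [IsScalarTower k A E]
    (r : MIdx p → S) (hr0 : r 0 = 1)
    -- `r` is a `D`-element
    (hrD : ∀ a : MIdx p → A, ∀ α ∈ Δ,
      sconv r (fun γ => ι (a γ)) α = sconv (fun γ => ι (fapply D a γ)) r α) :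
    -- (a)  `φ•r` is a `(φ•D)`-element
    (∀ a : MIdx q → A, ∀ e ∈ nab,
      sconv (φ.bulletS ι r) (fun γ => ι (a γ)) e
        = sconv (fun γ => ι (fapply (φ.bulletEnd D) a γ)) (φ.bulletS ι r) e)
    -- (b)  `φ•(r r') = (φ•r)(φ^D•r')` for every `r' ∈ S[[s]]_Δ`
    ∧ (∀ r' : MIdx p → S, ∀ e ∈ nab,
        φ.bulletS ι (sconv r r') e = sconv (φ.bulletS ι r) (φD.bulletS ι r') e)
    -- (b') in particular, `(φ•r)* = φ^D • r*`
    ∧ (∀ rs : MIdx p → S,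
        (∀ α ∈ Δ, sconv r rs α = (one' : MIdx p → S) α) →
        (∀ α ∈ Δ, sconv rs r α = (one' : MIdx p → S) α) →
        (∀ e ∈ nab, sconv (φ.bulletS ι r) (φD.bulletS ι rs) e = (one' : MIdx q → S) e)
        ∧ (∀ e ∈ nab, sconv (φD.bulletS ι rs) (φ.bulletS ι r) e = (one' : MIdx q → S) e))
    -- (c)  for an `A`-module `E` and `S = End_k(E)`:  `(φ•r)~ ∘ (φ^D)_E = φ_E ∘ r̃`
    ∧ (∀ rE : MIdx p → Module.End k E,
        -- `rE` is a `D`-element of `U^p(End_k(E);Δ)`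
        (∀ (a : MIdx p → A) (m : MIdx p → E), ∀ α ∈ Δ,
          fapply rE (smul' a m) α = smul' (fapply D a) (fapply rE m) α) →
        ∀ m : MIdx p → E, ∀ e ∈ nab,
          fapply (φ.bulletEndM rE) (φD.bulletM m) e = φ.bulletM (fapply rE m) e) := by
  have hr : IsDElement ι Δ D r := (isDElement_iff ι hΔ).2 hrD
  have hb : ∀ r' : MIdx p → S, ∀ e ∈ nab,
      φ.bulletS ι (sconv r r') e = sconv (φ.bulletS ι r) (φD.bulletS ι r') e :=
    -- `S` as a module over itself: `bulletSM` is `bulletS` and `smul'` is `sconv`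
    fun r' e he => hr.bulletSM_smul' ι φ hΔ hnab hD hφD r' he
  refine ⟨(isDElement_iff ι hnab).1 (hr.bulletS ι φ hΔ), hb, fun rs hrs _ => ?_,
    fun rE hrE m e he => ?_⟩
  · have hP : ∀ e ∈ nab, sconv (φ.bulletS ι r) (φD.bulletS ι rs) e = one' e := fun e he => by
      rw [← hb rs e he, φ.bulletS_congr ι hrs, φ.bulletS_one' ι he]
    refine ⟨hP, sconv_eq_one'_comm hnab ?_ hP⟩
    rw [φ.bulletS_zero ι hnab.zero_mem, hr0]
  · -- `E` as a module over `End_k E`: `fapply` is `smul'`, and `ι = Algebra.lsmul`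
    have hbullet : φ.bulletEndM rE = φ.bulletS (Algebra.lsmul k k E) rE :=
      funext fun u => Finset.sum_congr rfl fun α _ => rfl
    rw [hbullet]
    exact ((isDElement_lsmul hrE).bulletSM_smul' _ φ hΔ hnab hD hφD m he).symm

/-- Let `S` be a `k`-algebra over `A` (structural map `ι`),
`D ∈ HS^p_k(A;Δ)` with inverse `D*`, `φ : A[[s]]_Δ → A[[t]]_∇` a substitution map,
`φ^D` the substitution map with `(φ•D)~ ∘ φ^D = φ ∘ D̃`, and `r ∈ U^p(S;Δ)` a
`D`-element.  Then (a) `φ•r` is a `(φ•D)`-element; (b) `φ•(r·r') = (φ•r)·(φ^D•r')`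
and in particular `(φ•r)⁻¹ = φ^D•(r⁻¹)`; (c) if `E` is an `A`-module and
`S = End_k(E)`, then `(φ•r)~ ∘ (φ^D)_E = φ_E ∘ r̃`. -/
theorem stmt9 (k A S : Type*) [CommRing k] [CommRing A] [Algebra k A]
    [Ring S] [Algebra k S] (ι : A →ₐ[k] S)
    (p q : ℕ) (Δ : Set (MIdx p)) (nab : Set (MIdx q))
    (hΔ : IsCoideal Δ) (hnab : IsCoideal nab)
    (φ : SubstMap A p q Δ nab)
    (D Ds : MIdx p → Module.End k A)
    (hD : IsHS k A Δ D) (hDs : IsHS k A Δ Ds)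
    (hinv₁ : ∀ α ∈ Δ, sconv D Ds α = (one' : MIdx p → Module.End k A) α)
    (hinv₂ : ∀ α ∈ Δ, sconv Ds D α = (one' : MIdx p → Module.End k A) α)
    (φD : SubstMap A p q Δ nab)
    -- defining property of `φ^D`:  `(φ•D)~ ∘ φ^D = φ ∘ D̃`
    (hφD : ∀ f : MIdx p → A, ∀ e ∈ nab,
      fapply (φ.bulletEnd D) (φD.app f) e = φ.app (fapply D f) e)
    (E : Type*) [AddCommGroup E] [Module k E] [Module A E] [IsScalarTower k A E]
    (r : MIdx p → S) (hr0 : r 0 = 1)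
    -- `r` is a `D`-element
    (hrD : ∀ a : MIdx p → A, ∀ α ∈ Δ,
      sconv r (fun γ => ι (a γ)) α = sconv (fun γ => ι (fapply D a γ)) r α) :
    -- (a)  `φ•r` is a `(φ•D)`-element
    (∀ a : MIdx q → A, ∀ e ∈ nab,
      sconv (φ.bulletS ι r) (fun γ => ι (a γ)) e
        = sconv (fun γ => ι (fapply (φ.bulletEnd D) a γ)) (φ.bulletS ι r) e)
    -- (b)  `φ•(r r') = (φ•r)(φ^D•r')` for every `r' ∈ S[[s]]_Δ`
    ∧ (∀ r' : MIdx p → S, ∀ e ∈ nab,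
        φ.bulletS ι (sconv r r') e = sconv (φ.bulletS ι r) (φD.bulletS ι r') e)
    -- (b') in particular, `(φ•r)* = φ^D • r*`
    ∧ (∀ rs : MIdx p → S,
        (∀ α ∈ Δ, sconv r rs α = (one' : MIdx p → S) α) →
        (∀ α ∈ Δ, sconv rs r α = (one' : MIdx p → S) α) →
        (∀ e ∈ nab, sconv (φ.bulletS ι r) (φD.bulletS ι rs) e = (one' : MIdx q → S) e)
        ∧ (∀ e ∈ nab, sconv (φD.bulletS ι rs) (φ.bulletS ι r) e = (one' : MIdx q → S) e))
    -- (c)  for an `A`-module `E` and `S = End_k(E)`:  `(φ•r)~ ∘ (φ^D)_E = φ_E ∘ r̃`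
    ∧ (∀ rE : MIdx p → Module.End k E,
        -- `rE` is a `D`-element of `U^p(End_k(E);Δ)`
        (∀ (a : MIdx p → A) (m : MIdx p → E), ∀ α ∈ Δ,
          fapply rE (smul' a m) α = smul' (fapply D a) (fapply rE m) α) →
        ∀ m : MIdx p → E, ∀ e ∈ nab,
          fapply (φ.bulletEndM rE) (φD.bulletM m) e = φ.bulletM (fapply rE m) e) :=
  stmt9_general k A S ι p q Δ nab hΔ hnab φ D hD φD hφD E r hr0 hrD

end HS
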